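/- arXiv:1801.10576 — 3 statements merged into one kernel-verified Lean document; each statement's English description precedes it below -/
import Mathlib

section
/- (Density version of Sklar's theorem.) Let μ be a Borel probability measure on ℝ^d with Lebesgue density f. Suppose that for each j = 1, …, d the j-th marginal density f_j is continuous and strictly positive on ℝ, and let F_j(z) = ∫_{-∞}^z f_j(s) ds be the j-th marginal distribution function, so that each F_j is a strictly increasing C¹ bijection from ℝ onto (0,1). Let T : ℝ^d → (0,1)^d be given by T(z) = (F_1(z_1), …, F_d(z_d)). Then the pushforward measure T_*μ (the law of the vector of probability integral transforms) is absolutely continuous with respect to Lebesgue measure on (0,1)^d, and any density c of T_*μ satisfies f(z) = c(F_1(z_1), …, F_d(z_d)) · ∏_{j=1}^d f_j(z_j) for Lebesgue-almost every z ∈ ℝ^d. -/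
/-!
The map `T = Pi.map F` is injective and differentiable with diagonal derivative, whose
determinant is `∏ j, f_j (z_j) > 0` by the fundamental theorem of calculus. The change of
variables formula therefore says that `T` pushes the measure `ν` with density `∏ j, f_j (z_j)`
forward to Lebesgue measure on `range T`. Lebesgue measure, hence `μ`, is absolutely continuous
with respect to `ν`, so `T_*μ ≪ T_*ν ≪ volume`. If `c` is a density of `T_*μ`, then `T_*μ` and
`T_*(ν.withDensity (c ∘ T))` agree, and injectivity of pushforward along a measurable embedding
gives `μ = ν.withDensity (c ∘ T)`, i.e. `μ` has density `(c ∘ T) · ∏ j, f_j (z_j)`; densities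
are unique almost everywhere.
-/

open MeasureTheory Set

theorem MeasureTheory.integrable_of_isFiniteMeasure_withDensity_ofReal {α : Type*}
    [MeasurableSpace α] {μ : Measure α} {g : α → ℝ} (hg : AEStronglyMeasurable g μ)
    (hg0 : 0 ≤ᵐ[μ] g) [IsFiniteMeasure (μ.withDensity fun x => ENNReal.ofReal (g x))] :
    Integrable g μ := by
  refine ⟨hg, (hasFiniteIntegral_iff_ofReal hg0).2 ?_⟩
  simpa [withDensity_apply] using
    measure_lt_top (μ.withDensity fun x => ENNReal.ofReal (g x)) univ

theorem hasDerivAt_integral_Iic {E : Type*} [NormedAddCommGroup E] [NormedSpace ℝ E]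
    [CompleteSpace E] {g : ℝ → E} (hg : Integrable g) {x : ℝ} (hgx : ContinuousAt g x) :
    HasDerivAt (fun y => ∫ s in Iic y, g s) (g x) x := by
  have hsplit : (fun y => ∫ s in Iic y, g s) =
      fun y => (∫ s in (0 : ℝ)..y, g s) + ∫ s in Iic 0, g s := by
    funext y
    rw [← intervalIntegral.integral_Iic_sub_Iic hg.integrableOn hg.integrableOn, sub_add_cancel]
  rw [hsplit]
  exact (intervalIntegral.integral_hasDerivAt_right hg.intervalIntegrable
    hg.aestronglyMeasurable.stronglyMeasurableAtFilter hgx).add_const _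

theorem MeasureTheory.Measure.map_withDensity_comp {α β : Type*} [MeasurableSpace α]
    [MeasurableSpace β] {T : α → β} (hT : Measurable T) (ν : Measure α) {c : β → ENNReal}
    (hc : Measurable c) :
    (ν.withDensity fun a => c (T a)).map T = (ν.map T).withDensity c := by
  ext A hA
  rw [Measure.map_apply hT hA, withDensity_apply _ (hT hA), withDensity_apply _ hA,
    setLIntegral_map hA hc hT]

theorem MeasurableEmbedding.eq_withDensity_comp_of_map_eq {α β : Type*} [MeasurableSpace α]
    [MeasurableSpace β] {T : α → β} (hT : MeasurableEmbedding T) {ν μ : Measure α}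
    {ρ : Measure β} (hν : ν.map T = ρ.restrict (range T)) {c : β → ENNReal} (hc : Measurable c)
    (hμ : μ.map T = ρ.withDensity c) : μ = ν.withDensity fun a => c (T a) := by
  refine hT.map_injective ?_
  have hμ_range : (μ.map T).restrict (range T) = μ.map T :=
    Measure.restrict_eq_self_of_ae_mem <| hT.ae_map_iff.2 <| .of_forall mem_range_self
  rw [Measure.map_withDensity_comp hT.measurable ν hc, hν,
    ← restrict_withDensity hT.measurableSet_range, ← hμ, hμ_range]

theorem injective_piMap_of_hasDerivAt_pos {ι : Type*} {φ φ' : ι → ℝ → ℝ}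
    (hφ : ∀ j x, HasDerivAt (φ j) (φ' j x) x) (hφ'_pos : ∀ j x, 0 < φ' j x) :
    (Pi.map φ).Injective :=
  .piMap fun j => (strictMono_of_hasDerivAt_pos (hφ j) (hφ'_pos j)).injective

section PiMap

variable {ι : Type*} [Fintype ι]

theorem hasFDerivAt_piMap {φ : ι → ℝ → ℝ} {φ' : ι → ℝ} {z : ι → ℝ}
    (hφ : ∀ j, HasDerivAt (φ j) (φ' j) (z j)) :
    HasFDerivAt (Pi.map φ) (ContinuousLinearMap.pi fun j =>
      φ' j • ContinuousLinearMap.proj (R := ℝ) (φ := fun _ : ι => ℝ) j) z :=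
  hasFDerivAt_pi.2 fun j =>
    ((hφ j).hasFDerivAt.comp z (hasFDerivAt_apply (𝕜 := ℝ) j z)).congr_fderiv
      (by ext; simp [mul_comm])

theorem ContinuousLinearMap.det_pi_smul_proj (a : ι → ℝ) :
    (ContinuousLinearMap.pi fun j =>
      a j • ContinuousLinearMap.proj (R := ℝ) (φ := fun _ : ι => ℝ) j).det = ∏ j, a j := by
  classical
  have hdet (j : ι) : (a j • LinearMap.id (R := ℝ) (M := ℝ)).det = a j :=
    (LinearMap.det_smul _ _).trans (by simp)
  rw [ContinuousLinearMap.det, ← Finset.prod_congr rfl fun j _ => hdet j, ← LinearMap.det_pi]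
  rfl

variable {φ φ' : ι → ℝ → ℝ}

theorem measurable_prod_apply_of_hasDerivAt (hφ : ∀ j x, HasDerivAt (φ j) (φ' j x) x) :
    Measurable fun z : ι → ℝ => ∏ j, φ' j (z j) := by
  refine Finset.measurable_prod _ fun j _ => ?_
  rw [show φ' j = deriv (φ j) from funext fun x => (hφ j x).deriv.symm]
  exact (measurable_deriv _).comp (measurable_pi_apply j)

theorem measurableEmbedding_piMap_of_hasDerivAt_pos (hφ : ∀ j x, HasDerivAt (φ j) (φ' j x) x)
    (hφ'_pos : ∀ j x, 0 < φ' j x) : MeasurableEmbedding (Pi.map φ) :=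
  (Continuous.piMap fun j => continuous_iff_continuousAt.2 fun x => (hφ j x).continuousAt)
    |>.measurableEmbedding (injective_piMap_of_hasDerivAt_pos hφ hφ'_pos)

theorem map_piMap_withDensity_prod_deriv (hφ : ∀ j x, HasDerivAt (φ j) (φ' j x) x)
    (hφ'_pos : ∀ j x, 0 < φ' j x) :
    (volume.withDensity fun z : ι → ℝ => ENNReal.ofReal (∏ j, φ' j (z j))).map (Pi.map φ) =
      volume.restrict (range (Pi.map φ)) := by
  have h := map_withDensity_abs_det_fderiv_eq_addHaar (volume : Measure (ι → ℝ))
    MeasurableSet.univ.nullMeasurableSet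
    (f' := fun z => ContinuousLinearMap.pi fun j => φ' j (z j) • ContinuousLinearMap.proj j)
    (fun z _ => (hasFDerivAt_piMap fun j => hφ j (z j)).hasFDerivWithinAt)
    (injective_piMap_of_hasDerivAt_pos hφ hφ'_pos).injOn
  simpa only [Measure.restrict_univ, image_univ, ContinuousLinearMap.det_pi_smul_proj,
    abs_of_pos (Finset.prod_pos fun j _ => hφ'_pos j _)] using h

theorem absolutelyContinuous_map_piMap_of_hasDerivAt_pos
    (hφ : ∀ j x, HasDerivAt (φ j) (φ' j x) x) (hφ'_pos : ∀ j x, 0 < φ' j x)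
    {μ : Measure (ι → ℝ)} (hμ : μ ≪ volume) : μ.map (Pi.map φ) ≪ volume := by
  have hvol : (volume : Measure (ι → ℝ)) ≪
      volume.withDensity fun z => ENNReal.ofReal (∏ j, φ' j (z j)) :=
    withDensity_absolutelyContinuous'
      (measurable_prod_apply_of_hasDerivAt hφ).ennreal_ofReal.aemeasurable
      (.of_forall fun z => (ENNReal.ofReal_pos.2 (Finset.prod_pos fun j _ => hφ'_pos j _)).ne')
  have h := (hμ.trans hvol).map (measurableEmbedding_piMap_of_hasDerivAt_pos hφ hφ'_pos).measurable
  rw [map_piMap_withDensity_prod_deriv hφ hφ'_pos] at h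
  exact h.trans (Measure.absolutelyContinuous_of_le Measure.restrict_le_self)

theorem ae_eq_mul_prod_deriv_of_map_piMap_eq_withDensity
    (hφ : ∀ j x, HasDerivAt (φ j) (φ' j x) x) (hφ'_pos : ∀ j x, 0 < φ' j x)
    {f c : (ι → ℝ) → ℝ} (hf : Measurable f) (hc : Measurable c) (hf0 : ∀ z, 0 ≤ f z)
    (hc0 : ∀ u, 0 ≤ c u)
    (hfc : (volume.withDensity fun z => ENNReal.ofReal (f z)).map (Pi.map φ) =
      volume.withDensity fun u => ENNReal.ofReal (c u)) :
    ∀ᵐ z, f z = c (Pi.map φ z) * ∏ j, φ' j (z j) := by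
  have hΦ := measurableEmbedding_piMap_of_hasDerivAt_pos hφ hφ'_pos
  have hJ := (measurable_prod_apply_of_hasDerivAt hφ).ennreal_ofReal
  have hcΦ : Measurable fun z => ENNReal.ofReal (c (Pi.map φ z)) :=
    (hc.comp hΦ.measurable).ennreal_ofReal
  have h := hΦ.eq_withDensity_comp_of_map_eq (map_piMap_withDensity_prod_deriv hφ hφ'_pos)
    hc.ennreal_ofReal hfc
  rw [← withDensity_mul _ hJ hcΦ] at h
  filter_upwards [(withDensity_eq_iff_of_sigmaFinite hf.ennreal_ofReal.aemeasurable
    (hJ.mul hcΦ).aemeasurable).1 h] with z hz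
  have hJ0 : 0 ≤ ∏ j, φ' j (z j) := Finset.prod_nonneg fun j _ => (hφ'_pos j _).le
  rwa [Pi.mul_apply, ← ENNReal.ofReal_mul hJ0,
    ENNReal.ofReal_eq_ofReal_iff (hf0 z) (mul_nonneg hJ0 (hc0 _)), mul_comm] at hz

end PiMap

/-- Density version of Sklar's theorem.  The vector of probability integral
transforms has an absolutely continuous law, and any of its densities `c` (the copula
density) factorizes the joint density as the copula density composed with the marginal
distribution functions times the product of marginal densities. -/
theorem sklar_density {d : ℕ}
    (μ : Measure (Fin d → ℝ)) [IsProbabilityMeasure μ]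
    (f : (Fin d → ℝ) → ℝ) (hf_meas : Measurable f) (hf_nonneg : ∀ z, 0 ≤ f z)
    (hμ : μ = volume.withDensity (fun z => ENNReal.ofReal (f z)))
    (fm : Fin d → ℝ → ℝ)
    (hfm_cont : ∀ j, Continuous (fm j))
    (hfm_pos : ∀ j s, 0 < fm j s)
    (hfm_density : ∀ j, μ.map (fun z => z j) =
      volume.withDensity (fun s => ENNReal.ofReal (fm j s)))
    (F : Fin d → ℝ → ℝ)
    (hF : ∀ j z, F j z = ∫ s in Set.Iic z, fm j s)
    (T : (Fin d → ℝ) → (Fin d → ℝ))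
    (hT : ∀ z j, T z j = F j (z j)) :
    μ.map T ≪ (volume : Measure (Fin d → ℝ)) ∧
    ∀ c : (Fin d → ℝ) → ℝ, Measurable c → (∀ u, 0 ≤ c u) →
      μ.map T = volume.withDensity (fun u => ENNReal.ofReal (c u)) →
      ∀ᵐ z ∂(volume : Measure (Fin d → ℝ)),
        f z = c (T z) * ∏ j, fm j (z j) := by
  have hfm_int (j : Fin d) : Integrable (fm j) := by
    have : IsFiniteMeasure (volume.withDensity fun s => ENNReal.ofReal (fm j s)) := by
      rw [← hfm_density j]; infer_instance
    exact integrable_of_isFiniteMeasure_withDensity_ofReal (hfm_cont j).aestronglyMeasurable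
      (.of_forall fun s => (hfm_pos j s).le)
  have hF_deriv (j : Fin d) (x : ℝ) : HasDerivAt (F j) (fm j x) x := by
    simpa only [← funext (hF j)] using
      hasDerivAt_integral_Iic (hfm_int j) (hfm_cont j).continuousAt
  obtain rfl : T = Pi.map F := funext fun z => funext (hT z)
  subst hμ
  exact ⟨absolutelyContinuous_map_piMap_of_hasDerivAt_pos hF_deriv hfm_pos
      (withDensity_absolutelyContinuous _ _),
    fun c hc hc0 hμc => ae_eq_mul_prod_deriv_of_map_piMap_eq_withDensity hF_deriv hfm_pos
      hf_meas hc hf_nonneg hc0 hμc⟩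
end

section
/- (One-parameter exponential family: strict convexity of the log-partition function and identifiability.) Let μ be a σ-finite measure, a a real-valued measurable function, and suppose L(θ) = ∫ exp{θ·a(y)} dμ(y) is finite for all θ in a nonempty open interval I ⊆ ℝ; let b(θ) = log L(θ) and f(y; θ) = exp{a(y)θ − b(θ)}. Then b is twice differentiable on I with b″(θ) = ∫ {a(y) − b′(θ)}² f(y; θ) dμ(y) ≥ 0, i.e., b″(θ) equals the variance of a(Y) when Y has density f(·; θ) with respect to μ. If a is not μ-almost everywhere constant, then b″(θ) > 0 for all θ ∈ I, so b′ is strictly increasing on I and for each θ₀ ∈ I the root of the estimating equation ∫ {a(y) − b′(θ)} f(y; θ₀) dμ(y) = 0 in θ ∈ I is unique and equals θ₀. -/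
/-!
Near any `θ` at which the partition function `Z(θ) = ∫ exp (θ a) dμ` is finite, `|a|ⁿ exp (x a)`
is dominated, uniformly for `x` close to `θ`, by a multiple of `exp ((θ - 2δ) a) + exp ((θ + 2δ) a)`
(because `|t|ⁿ ≤ n! δ⁻ⁿ exp (δ |t|)`). Hence all moments `Mₙ(θ) = ∫ aⁿ exp (θ a) dμ` are finite and
`Mₙ' = Mₙ₊₁`, so `b = log Z` has `b' = M₁ / Z` and `b'' = M₂ / Z - (M₁ / Z)²`, which is the variance
of `a` under the density `f(·; θ) = exp (θ a) / Z(θ)`. A variance vanishes only if `a` is a.e.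
constant, so otherwise `b'` is strictly increasing; since `∫ (a - b'(θ)) f(·; θ₀) dμ = b'(θ₀) - b'(θ)`,
the estimating equation has the single root `θ₀`.
-/

open MeasureTheory Real Filter Topology
open scoped Nat

namespace ExpFamily

lemma exp_mul_le_exp_sub_add_exp {s θ r : ℝ} (hs : |s - θ| ≤ r) (t : ℝ) :
    exp (s * t) ≤ exp ((θ - r) * t) + exp ((θ + r) * t) := by
  rw [abs_sub_le_iff] at hs
  rcases le_total t 0 with ht | ht
  · calc exp (s * t) ≤ exp ((θ - r) * t) :=
          exp_le_exp.2 (mul_le_mul_of_nonpos_right (by linarith) ht)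
      _ ≤ _ := le_add_of_nonneg_right (exp_pos _).le
  · calc exp (s * t) ≤ exp ((θ + r) * t) :=
          exp_le_exp.2 (mul_le_mul_of_nonneg_right (by linarith) ht)
      _ ≤ _ := le_add_of_nonneg_left (exp_pos _).le

lemma abs_pow_mul_exp_le (n : ℕ) {θ δ x : ℝ} (hδ : 0 < δ) (hx : |x - θ| < δ) (t : ℝ) :
    |t| ^ n * exp (x * t) ≤ n ! / δ ^ n * (exp ((θ - 2 * δ) * t) + exp ((θ + 2 * δ) * t)) := by
  have hpow : |t| ^ n ≤ n ! / δ ^ n * exp (δ * |t|) := by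
    have h := pow_div_factorial_le_exp _ (mul_nonneg hδ.le (abs_nonneg t)) n
    rw [mul_pow, div_le_iff₀ (by positivity)] at h
    rw [div_mul_eq_mul_div, le_div_iff₀ (by positivity)]
    linarith
  have hexp : exp (δ * |t| + x * t) ≤ exp ((θ - 2 * δ) * t) + exp ((θ + 2 * δ) * t) := by
    rw [abs_lt] at hx
    rcases abs_cases t with ⟨ht, -⟩ | ⟨ht, -⟩ <;> rw [ht]
    · rw [show δ * t + x * t = (x + δ) * t by ring]
      exact exp_mul_le_exp_sub_add_exp (abs_sub_le_iff.2 ⟨by linarith, by linarith⟩) t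
    · rw [show δ * -t + x * t = (x - δ) * t by ring]
      exact exp_mul_le_exp_sub_add_exp (abs_sub_le_iff.2 ⟨by linarith, by linarith⟩) t
  calc |t| ^ n * exp (x * t) ≤ n ! / δ ^ n * exp (δ * |t|) * exp (x * t) := by gcongr
    _ = n ! / δ ^ n * exp (δ * |t| + x * t) := by rw [exp_add]; ring
    _ ≤ _ := by gcongr

lemma sub_sq_mul_eq {α : Type*} (a w : α → ℝ) (m : ℝ) :
    (fun y => (a y - m) ^ 2 * w y) = fun y => a y ^ 2 * w y - 2 * m * (a y * w y) + m ^ 2 * w y := by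
  funext y
  ring

variable {α : Type*} [MeasurableSpace α] {μ : Measure α} {a : α → ℝ} {θ : ℝ}

section Weighted

variable {w : α → ℝ}

lemma integral_sub_mul (hw : Integrable w μ) (haw : Integrable (fun y => a y * w y) μ) (m : ℝ) :
    ∫ y, (a y - m) * w y ∂μ = ∫ y, a y * w y ∂μ - m * ∫ y, w y ∂μ := by
  simp_rw [sub_mul]
  rw [integral_sub haw (hw.const_mul m), integral_const_mul]

lemma integrable_sub_sq_mul (hw : Integrable w μ) (haw : Integrable (fun y => a y * w y) μ)
    (ha2w : Integrable (fun y => a y ^ 2 * w y) μ) (m : ℝ) :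
    Integrable (fun y => (a y - m) ^ 2 * w y) μ := by
  rw [sub_sq_mul_eq]
  exact (ha2w.sub (haw.const_mul _)).add (hw.const_mul _)

lemma integral_sub_sq_mul (hw : Integrable w μ) (haw : Integrable (fun y => a y * w y) μ)
    (ha2w : Integrable (fun y => a y ^ 2 * w y) μ) (m : ℝ) :
    ∫ y, (a y - m) ^ 2 * w y ∂μ =
      ∫ y, a y ^ 2 * w y ∂μ - 2 * m * ∫ y, a y * w y ∂μ + m ^ 2 * ∫ y, w y ∂μ := by
  rw [sub_sq_mul_eq, integral_add (f := fun y => a y ^ 2 * w y - 2 * m * (a y * w y))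
      (ha2w.sub (haw.const_mul _)) (hw.const_mul _),
    integral_sub ha2w (haw.const_mul _), integral_const_mul, integral_const_mul]

lemma integral_sub_sq_mul_pos (hw : ∀ y, 0 < w y) {m : ℝ}
    (hint : Integrable (fun y => (a y - m) ^ 2 * w y) μ) (hna : ¬ ∃ c, ∀ᵐ y ∂μ, a y = c) :
    0 < ∫ y, (a y - m) ^ 2 * w y ∂μ := by
  have hnonneg : 0 ≤ fun y => (a y - m) ^ 2 * w y := fun y => mul_nonneg (sq_nonneg _) (hw y).le
  refine (integral_nonneg hnonneg).lt_of_ne fun hzero => hna ⟨m, ?_⟩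
  filter_upwards [(integral_eq_zero_iff_of_nonneg hnonneg hint).1 hzero.symm] with y hy
  simpa [sub_eq_zero, (hw y).ne'] using hy

end Weighted

lemma exists_integrable_exp_sub_add_exp
    (h : ∀ᶠ x in 𝓝 θ, Integrable (fun y => exp (x * a y)) μ) :
    ∃ δ > 0, Integrable (fun y => exp ((θ - 2 * δ) * a y) + exp ((θ + 2 * δ) * a y)) μ := by
  obtain ⟨ε, hε, hball⟩ := Metric.eventually_nhds_iff.1 h
  refine ⟨ε / 4, by positivity, (hball ?_).add (hball ?_)⟩ <;>
    rw [Real.dist_eq, abs_lt] <;> constructor <;> linarith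

lemma integrable_pow_mul_exp (ha : Measurable a)
    (h : ∀ᶠ x in 𝓝 θ, Integrable (fun y => exp (x * a y)) μ) (n : ℕ) :
    Integrable (fun y => a y ^ n * exp (θ * a y)) μ := by
  obtain ⟨δ, hδ, hbound⟩ := exists_integrable_exp_sub_add_exp h
  refine (hbound.const_mul (n ! / δ ^ n)).mono' (by fun_prop) (ae_of_all _ fun y => ?_)
  rw [norm_mul, norm_pow, Real.norm_eq_abs, Real.norm_of_nonneg (exp_pos _).le]
  exact abs_pow_mul_exp_le n hδ (by simpa using hδ) (a y)

lemma hasDerivAt_integral_pow_mul_exp (ha : Measurable a)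
    (h : ∀ᶠ x in 𝓝 θ, Integrable (fun y => exp (x * a y)) μ) (n : ℕ) :
    HasDerivAt (fun x => ∫ y, a y ^ n * exp (x * a y) ∂μ)
      (∫ y, a y ^ (n + 1) * exp (θ * a y) ∂μ) θ := by
  obtain ⟨δ, hδ, hbound⟩ := exists_integrable_exp_sub_add_exp h
  refine (hasDerivAt_integral_of_dominated_loc_of_deriv_le (Metric.ball_mem_nhds θ hδ)
    (F' := fun x y => a y ^ (n + 1) * exp (x * a y)) (Eventually.of_forall fun x => by fun_prop)
    (integrable_pow_mul_exp ha h n) (by fun_prop) (ae_of_all _ fun y x hx => ?_)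
    (hbound.const_mul ((n + 1) ! / δ ^ (n + 1))) (ae_of_all _ fun y x _ => ?_)).2
  · rw [norm_mul, norm_pow, Real.norm_eq_abs, Real.norm_of_nonneg (exp_pos _).le]
    exact abs_pow_mul_exp_le (n + 1) hδ (by rwa [Metric.mem_ball, Real.dist_eq] at hx) (a y)
  · exact ((hasDerivAt_mul_const (a y)).exp.const_mul (a y ^ n)).congr_deriv (by ring)

variable (μ a)

noncomputable def partitionFunction (θ : ℝ) : ℝ := ∫ y, exp (θ * a y) ∂μ

noncomputable def logPartition (θ : ℝ) : ℝ := log (partitionFunction μ a θ)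

noncomputable def density (y : α) (θ : ℝ) : ℝ := exp (a y * θ - logPartition μ a θ)

variable {μ a}

lemma partitionFunction_pos [NeZero μ] (hθ : Integrable (fun y => exp (θ * a y)) μ) :
    0 < partitionFunction μ a θ :=
  integral_exp_pos hθ

lemma hasDerivAt_partitionFunction (ha : Measurable a)
    (h : ∀ᶠ x in 𝓝 θ, Integrable (fun y => exp (x * a y)) μ) :
    HasDerivAt (partitionFunction μ a) (∫ y, a y * exp (θ * a y) ∂μ) θ := by
  have h0 := hasDerivAt_integral_pow_mul_exp ha h 0
  simp only [pow_zero, one_mul, zero_add, pow_one] at h0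
  exact h0

lemma hasDerivAt_logPartition [NeZero μ] (ha : Measurable a)
    (h : ∀ᶠ x in 𝓝 θ, Integrable (fun y => exp (x * a y)) μ) :
    HasDerivAt (logPartition μ a)
      ((∫ y, a y * exp (θ * a y) ∂μ) / partitionFunction μ a θ) θ :=
  (hasDerivAt_partitionFunction ha h).log (partitionFunction_pos h.self_of_nhds).ne'

lemma density_eq (hZ : 0 < partitionFunction μ a θ) (y : α) :
    density μ a y θ = exp (θ * a y) / partitionFunction μ a θ := by
  rw [density, exp_sub, logPartition, exp_log hZ, mul_comm]

lemma integral_mul_density (hZ : 0 < partitionFunction μ a θ) (g : α → ℝ) :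
    ∫ y, g y * density μ a y θ ∂μ = (∫ y, g y * exp (θ * a y) ∂μ) / partitionFunction μ a θ := by
  simp_rw [density_eq hZ, mul_div_assoc']
  exact integral_div _ _

lemma integrable_mul_density (hZ : 0 < partitionFunction μ a θ) {g : α → ℝ}
    (hg : Integrable (fun y => g y * exp (θ * a y)) μ) :
    Integrable (fun y => g y * density μ a y θ) μ := by
  simp_rw [density_eq hZ, mul_div_assoc']
  exact hg.div_const _

lemma integral_sub_mul_density [NeZero μ] (ha : Measurable a)
    (h : ∀ᶠ x in 𝓝 θ, Integrable (fun y => exp (x * a y)) μ) (m : ℝ) :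
    ∫ y, (a y - m) * density μ a y θ ∂μ = deriv (logPartition μ a) θ - m := by
  have hZ := partitionFunction_pos h.self_of_nhds
  rw [integral_mul_density hZ, (hasDerivAt_logPartition ha h).deriv,
    integral_sub_mul h.self_of_nhds (by simpa using integrable_pow_mul_exp ha h 1)]
  change (_ - m * partitionFunction μ a θ) / _ = _
  rw [sub_div, mul_div_cancel_right₀ _ hZ.ne']

lemma integral_sub_deriv_sq_mul_density [NeZero μ] (ha : Measurable a)
    (h : ∀ᶠ x in 𝓝 θ, Integrable (fun y => exp (x * a y)) μ) :
    ∫ y, (a y - deriv (logPartition μ a) θ) ^ 2 * density μ a y θ ∂μ =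
      (∫ y, a y ^ 2 * exp (θ * a y) ∂μ) / partitionFunction μ a θ -
        ((∫ y, a y * exp (θ * a y) ∂μ) / partitionFunction μ a θ) ^ 2 := by
  have hZ := partitionFunction_pos h.self_of_nhds
  rw [integral_mul_density hZ, (hasDerivAt_logPartition ha h).deriv,
    integral_sub_sq_mul h.self_of_nhds (by simpa using integrable_pow_mul_exp ha h 1)
      (integrable_pow_mul_exp ha h 2)]
  change (_ + _ * partitionFunction μ a θ) / _ = _
  generalize partitionFunction μ a θ = Z at hZ ⊢
  generalize ∫ y, a y * exp (θ * a y) ∂μ = M₁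
  generalize ∫ y, a y ^ 2 * exp (θ * a y) ∂μ = M₂
  field_simp
  ring

lemma hasDerivAt_deriv_logPartition [NeZero μ] (ha : Measurable a)
    (h : ∀ᶠ x in 𝓝 θ, Integrable (fun y => exp (x * a y)) μ) :
    HasDerivAt (deriv (logPartition μ a))
      (∫ y, (a y - deriv (logPartition μ a) θ) ^ 2 * density μ a y θ ∂μ) θ := by
  have hZ := partitionFunction_pos h.self_of_nhds
  have hM₁ := hasDerivAt_integral_pow_mul_exp ha h 1
  simp only [pow_one] at hM₁
  rw [integral_sub_deriv_sq_mul_density ha h]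
  refine ((hM₁.div (hasDerivAt_partitionFunction ha h) hZ.ne').congr_deriv ?_).congr_of_eventuallyEq
    (h.eventually_nhds.mono fun x hx => (hasDerivAt_logPartition ha hx).deriv)
  field_simp

lemma integral_sub_sq_mul_density_pos [NeZero μ] (ha : Measurable a)
    (h : ∀ᶠ x in 𝓝 θ, Integrable (fun y => exp (x * a y)) μ)
    (hna : ¬ ∃ c, ∀ᵐ y ∂μ, a y = c) (m : ℝ) :
    0 < ∫ y, (a y - m) ^ 2 * density μ a y θ ∂μ :=
  integral_sub_sq_mul_pos (fun y => exp_pos _)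
    (integrable_mul_density (partitionFunction_pos h.self_of_nhds)
      (integrable_sub_sq_mul h.self_of_nhds (by simpa using integrable_pow_mul_exp ha h 1)
        (integrable_pow_mul_exp ha h 2) m)) hna

end ExpFamily

open ExpFamily in
theorem exponential_family_identifiability_general
    {α : Type*} [MeasurableSpace α] (μ : Measure α)
    (a : α → ℝ) (ha : Measurable a)
    (I : Set ℝ) (hI_open : IsOpen I) (hI_conn : I.OrdConnected)
    (hL : ∀ θ ∈ I, Integrable (fun y => Real.exp (θ * a y)) μ)
    (b : ℝ → ℝ) (hb : ∀ θ, b θ = Real.log (∫ y, Real.exp (θ * a y) ∂μ))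
    (f : α → ℝ → ℝ) (hf : ∀ y θ, f y θ = Real.exp (a y * θ - b θ)) :
    (∀ θ ∈ I,
      DifferentiableAt ℝ b θ ∧
      HasDerivAt (deriv b) (∫ y, (a y - deriv b θ) ^ 2 * f y θ ∂μ) θ ∧
      0 ≤ ∫ y, (a y - deriv b θ) ^ 2 * f y θ ∂μ) ∧
    ((¬ ∃ c : ℝ, ∀ᵐ y ∂μ, a y = c) →
      (∀ θ ∈ I, 0 < ∫ y, (a y - deriv b θ) ^ 2 * f y θ ∂μ) ∧
      StrictMonoOn (deriv b) I ∧
      (∀ θ₀ ∈ I, ∀ θ ∈ I,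
        (∫ y, (a y - deriv b θ) * f y θ₀ ∂μ) = 0 → θ = θ₀)) := by
  obtain rfl : b = logPartition μ a := funext hb
  obtain rfl : f = density μ a := funext₂ hf
  obtain rfl | hμ := eq_zero_or_neZero μ
  · have hb0 : logPartition (0 : Measure α) a = 0 := funext fun θ => by
      simp [logPartition, partitionFunction]
    simp [hb0]
  have hloc : ∀ θ ∈ I, ∀ᶠ x in 𝓝 θ, Integrable (fun y => exp (x * a y)) μ :=
    fun θ hθ => eventually_of_mem (hI_open.mem_nhds hθ) hL
  have hvar := fun θ hθ => hasDerivAt_deriv_logPartition ha (hloc θ hθ)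
  refine ⟨fun θ hθ => ⟨(hasDerivAt_logPartition ha (hloc θ hθ)).differentiableAt, hvar θ hθ,
    integral_nonneg fun y => mul_nonneg (sq_nonneg _) (exp_pos _).le⟩, fun hna => ?_⟩
  have hpos : ∀ θ ∈ I, 0 < ∫ y, (a y - deriv (logPartition μ a) θ) ^ 2 * density μ a y θ ∂μ :=
    fun θ hθ => integral_sub_sq_mul_density_pos ha (hloc θ hθ) hna _
  have hmono : StrictMonoOn (deriv (logPartition μ a)) I :=
    strictMonoOn_of_hasDerivWithinAt_pos hI_conn.convex
      (fun θ hθ => (hvar θ hθ).continuousAt.continuousWithinAt)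
      (fun θ hθ => (hvar θ (interior_subset hθ)).hasDerivWithinAt)
      fun θ hθ => hpos θ (interior_subset hθ)
  refine ⟨hpos, hmono, fun θ₀ hθ₀ θ hθ hroot => hmono.injOn hθ hθ₀ ?_⟩
  rw [integral_sub_mul_density ha (hloc θ₀ hθ₀)] at hroot
  linarith

/-- In a one-parameter exponential family, the log-partition function `b`
is twice differentiable with `b''(θ) = ∫ (a(y) - b'(θ))² f(y; θ) dμ(y) ≥ 0` (the
variance of the sufficient statistic).  If `a` is not `μ`-a.e. constant, then
`b''(θ) > 0` on `I`, `b'` is strictly increasing on `I`, and for each `θ₀ ∈ I` the root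
in `θ ∈ I` of the estimating equation `∫ (a(y) - b'(θ)) f(y; θ₀) dμ(y) = 0` is unique
and equals `θ₀`. -/
theorem exponential_family_identifiability
    {α : Type*} [MeasurableSpace α] (μ : Measure α) [SigmaFinite μ]
    (a : α → ℝ) (ha : Measurable a)
    (I : Set ℝ) (hI_open : IsOpen I) (hI_ne : I.Nonempty) (hI_conn : I.OrdConnected)
    (hL : ∀ θ ∈ I, Integrable (fun y => Real.exp (θ * a y)) μ)
    (b : ℝ → ℝ) (hb : ∀ θ, b θ = Real.log (∫ y, Real.exp (θ * a y) ∂μ))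
    (f : α → ℝ → ℝ) (hf : ∀ y θ, f y θ = Real.exp (a y * θ - b θ)) :
    (∀ θ ∈ I,
      DifferentiableAt ℝ b θ ∧
      HasDerivAt (deriv b) (∫ y, (a y - deriv b θ) ^ 2 * f y θ ∂μ) θ ∧
      0 ≤ ∫ y, (a y - deriv b θ) ^ 2 * f y θ ∂μ) ∧
    ((¬ ∃ c : ℝ, ∀ᵐ y ∂μ, a y = c) →
      (∀ θ ∈ I, 0 < ∫ y, (a y - deriv b θ) ^ 2 * f y θ ∂μ) ∧
      StrictMonoOn (deriv b) I ∧
      (∀ θ₀ ∈ I, ∀ θ ∈ I,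
        (∫ y, (a y - deriv b θ) * f y θ₀ ∂μ) = 0 → θ = θ₀)) :=
  exponential_family_identifiability_general μ a ha I hI_open hI_conn hL b hb f hf
end

section
/- (Inverse probability weighting under right censoring.) Let Y and Z be independent real random variables on a probability space, let ψ : ℝ → ℝ be measurable with ψ(Y) integrable, and set G(y) = Pr(Z ≥ y). Assume G(Y) > 0 almost surely. Then the random variable ψ(Y)·𝟙(Y ≤ Z)/G(Y) is integrable and E{ψ(Y)·𝟙(Y ≤ Z)/G(Y)} = E{ψ(Y)}. In particular, writing Y^c = min(Y, Z) and Δ = 𝟙(Y ≤ Z), one has E{ψ(Y^c)·Δ/G(Y^c)} = E{ψ(Y)}, so the inverse-probability-weighted estimating equation based on the censored observation (Y^c, Δ) is unbiased for the estimating equation based on the uncensored Y. -/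
/-!
Under independence the law of `(Y, Z)` is the product `μ ⊗ ν` of the marginals, so by Fubini the
weighted integrand may be integrated over `z` first. For fixed `y` the indicator `𝟙(y ≤ z)` has
`ν`-integral `ν [y, ∞) = G(y)`, which cancels the weight `1 / G(y)` and leaves `ψ(y)`. The same
computation with `|ψ|` gives integrability. On `{Y ≤ Z}` one has `min(Y, Z) = Y`, so the censored
version of the estimating equation is the same integrand.
-/

open MeasureTheory

namespace MeasureTheory

variable {α β : Type*} [MeasurableSpace β]

/-- For `s = {(y, z) | y ≤ z}` this is the paper's `ψ(y) 𝟙(y ≤ z) / G(y)`, with `G(y) = ν [y, ∞)`. -/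
noncomputable def ipw (ν : Measure β) (s : Set (α × β)) (ψ : α → ℝ) (p : α × β) : ℝ :=
  ψ p.1 * s.indicator 1 p / ν.real (Prod.mk p.1 ⁻¹' s)

variable {ν : Measure β} {s : Set (α × β)} {ψ : α → ℝ}

theorem ipw_prodMk_eq_indicator (a : α) (b : β) :
    ipw ν s ψ (a, b) =
      (Prod.mk a ⁻¹' s).indicator (fun _ => ψ a / ν.real (Prod.mk a ⁻¹' s)) b := by
  by_cases hb : (a, b) ∈ s <;> simp [ipw, hb]

variable [MeasurableSpace α] {μ : Measure α}

theorem integral_ipw_prodMk [IsFiniteMeasure ν] (hs : MeasurableSet s) {a : α}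
    (ha : 0 < ν.real (Prod.mk a ⁻¹' s)) :
    ∫ b, ipw ν s ψ (a, b) ∂ν = ψ a := by
  simp_rw [ipw_prodMk_eq_indicator]
  rw [integral_indicator_const _ (measurable_prodMk_left hs),
    smul_eq_mul, mul_div_cancel₀ _ ha.ne']

theorem integral_norm_ipw_prodMk [IsFiniteMeasure ν] (hs : MeasurableSet s) {a : α}
    (ha : 0 < ν.real (Prod.mk a ⁻¹' s)) :
    ∫ b, ‖ipw ν s ψ (a, b)‖ ∂ν = ‖ψ a‖ := by
  simp_rw [ipw_prodMk_eq_indicator, norm_indicator_eq_indicator_norm]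
  rw [integral_indicator_const _ (measurable_prodMk_left hs), smul_eq_mul, norm_div,
    Real.norm_of_nonneg ha.le, mul_div_cancel₀ _ ha.ne']

theorem aestronglyMeasurable_ipw [SFinite ν] (hs : MeasurableSet s)
    (hψ : AEStronglyMeasurable ψ μ) : AEStronglyMeasurable (ipw ν s ψ) (μ.prod ν) :=
  (hψ.comp_fst.mul (measurable_one.indicator hs).aestronglyMeasurable).div₀
    ((measurable_measure_prodMk_left hs).ennreal_toReal.comp measurable_fst).aestronglyMeasurable

theorem integrable_ipw [SFinite μ] [IsFiniteMeasure ν] (hs : MeasurableSet s)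
    (hψ : Integrable ψ μ) (hpos : ∀ᵐ a ∂μ, 0 < ν.real (Prod.mk a ⁻¹' s)) :
    Integrable (ipw ν s ψ) (μ.prod ν) := by
  refine (integrable_prod_iff (aestronglyMeasurable_ipw hs hψ.1)).mpr ⟨?_, ?_⟩
  · refine .of_forall fun a => ?_
    simp_rw [ipw_prodMk_eq_indicator]
    exact (integrable_const _).indicator (measurable_prodMk_left hs)
  · refine hψ.norm.congr ?_
    filter_upwards [hpos] with a ha using (integral_norm_ipw_prodMk hs ha).symm

theorem integral_ipw [SFinite μ] [IsFiniteMeasure ν] (hs : MeasurableSet s)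
    (hψ : Integrable ψ μ) (hpos : ∀ᵐ a ∂μ, 0 < ν.real (Prod.mk a ⁻¹' s)) :
    ∫ p, ipw ν s ψ p ∂(μ.prod ν) = ∫ a, ψ a ∂μ := by
  rw [integral_prod _ (integrable_ipw hs hψ hpos)]
  refine integral_congr_ae ?_
  filter_upwards [hpos] with a ha using integral_ipw_prodMk hs ha

end MeasureTheory

namespace ProbabilityTheory.IndepFun

variable {Ω α β : Type*} [MeasurableSpace Ω] [MeasurableSpace α] [MeasurableSpace β]
  {P : Measure Ω} [IsFiniteMeasure P] {X : Ω → α} {W : Ω → β} {s : Set (α × β)} {ψ : α → ℝ}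

theorem integrable_ipw (hindep : IndepFun X W P) (hX : Measurable X) (hW : Measurable W)
    (hs : MeasurableSet s) (hψ : Integrable ψ (P.map X))
    (hpos : ∀ᵐ a ∂P.map X, 0 < (P.map W).real (Prod.mk a ⁻¹' s)) :
    Integrable (fun ω => ipw (P.map W) s ψ (X ω, W ω)) P := by
  have hlaw := (indepFun_iff_map_prod_eq_prod_map_map hX.aemeasurable hW.aemeasurable).mp hindep
  have hint := MeasureTheory.integrable_ipw hs hψ hpos
  rw [← hlaw] at hint
  exact hint.comp_measurable (hX.prodMk hW)

theorem integral_ipw (hindep : IndepFun X W P) (hX : Measurable X) (hW : Measurable W)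
    (hs : MeasurableSet s) (hψ : Integrable ψ (P.map X))
    (hpos : ∀ᵐ a ∂P.map X, 0 < (P.map W).real (Prod.mk a ⁻¹' s)) :
    ∫ ω, ipw (P.map W) s ψ (X ω, W ω) ∂P = ∫ ω, ψ (X ω) ∂P := by
  have hlaw := (indepFun_iff_map_prod_eq_prod_map_map hX.aemeasurable hW.aemeasurable).mp hindep
  have hmeas : AEStronglyMeasurable (ipw (P.map W) s ψ) (P.map fun ω => (X ω, W ω)) := by
    rw [hlaw]
    exact aestronglyMeasurable_ipw hs hψ.1
  rw [← integral_map (hX.prodMk hW).aemeasurable hmeas, hlaw,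
    MeasureTheory.integral_ipw hs hψ hpos, integral_map hX.aemeasurable hψ.1]

end ProbabilityTheory.IndepFun

/-- Inverse probability weighting under right censoring.  If `Y` and the
censoring variable `Z` are independent, `G(y) = Pr(Z ≥ y)`, and `G(Y) > 0` a.s., then
`ψ(Y)·𝟙(Y ≤ Z)/G(Y)` is integrable with expectation `E{ψ(Y)}`; in particular, with
`Y^c = min(Y, Z)` and `Δ = 𝟙(Y ≤ Z)`, `E{ψ(Y^c) Δ / G(Y^c)} = E{ψ(Y)}`. -/
theorem ipw_right_censoring {Ω : Type*} [MeasurableSpace Ω]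
    (P : Measure Ω) [IsProbabilityMeasure P]
    (Y Z : Ω → ℝ) (hY : Measurable Y) (hZ : Measurable Z)
    (hindep : ProbabilityTheory.IndepFun Y Z P)
    (ψ : ℝ → ℝ) (hψ : Measurable ψ)
    (hint : Integrable (fun ω => ψ (Y ω)) P)
    (G : ℝ → ℝ) (hG : ∀ y, G y = (P {ω | y ≤ Z ω}).toReal)
    (hGpos : ∀ᵐ ω ∂P, 0 < G (Y ω)) :
    Integrable (fun ω => ψ (Y ω) * (if Y ω ≤ Z ω then 1 else 0) / G (Y ω)) P ∧
    (∫ ω, ψ (Y ω) * (if Y ω ≤ Z ω then 1 else 0) / G (Y ω) ∂P) =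
      (∫ ω, ψ (Y ω) ∂P) ∧
    (∫ ω, ψ (min (Y ω) (Z ω)) * (if Y ω ≤ Z ω then 1 else 0) /
        G (min (Y ω) (Z ω)) ∂P) = ∫ ω, ψ (Y ω) ∂P := by
  set s : Set (ℝ × ℝ) := {p | p.1 ≤ p.2}
  have hs : MeasurableSet s := measurableSet_le measurable_fst measurable_snd
  have hG_map : ∀ y, G y = (P.map Z).real (Prod.mk y ⁻¹' s) := fun y => by
    rw [hG, Measure.real, Measure.map_apply hZ (measurable_prodMk_left hs)]; rfl
  have hweighted : (fun ω => ψ (Y ω) * (if Y ω ≤ Z ω then 1 else 0) / G (Y ω)) =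
      fun ω => ipw (P.map Z) s ψ (Y ω, Z ω) := by
    funext ω; simp [ipw, s, Set.indicator_apply, hG_map]
  have hψY : Integrable ψ (P.map Y) :=
    (integrable_map_measure hψ.aestronglyMeasurable hY.aemeasurable).mpr hint
  have hpos : ∀ᵐ y ∂P.map Y, 0 < (P.map Z).real (Prod.mk y ⁻¹' s) := by
    refine (ae_map_iff hY.aemeasurable (measurableSet_lt measurable_const
      (measurable_measure_prodMk_left hs).ennreal_toReal)).mpr ?_
    simpa only [hG_map, Measure.real] using hGpos
  have hcensored : (fun ω => ψ (min (Y ω) (Z ω)) * (if Y ω ≤ Z ω then 1 else 0) /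
      G (min (Y ω) (Z ω))) = fun ω => ψ (Y ω) * (if Y ω ≤ Z ω then 1 else 0) / G (Y ω) := by
    funext ω; split_ifs with h <;> simp [h]
  rw [hcensored, hweighted]
  have hmain := hindep.integral_ipw hY hZ hs hψY hpos
  exact ⟨hindep.integrable_ipw hY hZ hs hψY hpos, hmain, hmain⟩
end
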